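/- If G is a k-connected graph on n ≥ 3 vertices and α(G) ≤ k + 1, then G is traceable. -/

import Mathlib

open SimpleGraph Finset Matrix

variable {V : Type*} [Fintype V] [DecidableEq V]

def SimpleGraph.IsHamiltonianConnected (G : SimpleGraph V) : Prop :=
  ∀ u v : V, u ≠ v → ∃ p : G.Walk u v, p.IsHamiltonian

def SimpleGraph.IsTraceable (G : SimpleGraph V) : Prop :=
  ∃ (u v : V) (p : G.Walk u v), p.IsHamiltonian

def SimpleGraph.IsHomogeneouslyTraceable (G : SimpleGraph V) : Prop :=
  ∀ u : V, ∃ (v : V) (p : G.Walk u v), p.IsHamiltonian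

/-- `G` is `k`-connected: more than `k` vertices, and removing fewer than `k`
vertices leaves a connected graph. -/
def SimpleGraph.IsKConnected (G : SimpleGraph V) (k : ℕ) : Prop :=
  k < Fintype.card V ∧
    ∀ S : Finset V, S.card < k → (G.induce ((↑S : Set V)ᶜ)).Connected

def SimpleGraph.IsIndependentSet (G : SimpleGraph V) (s : Finset V) : Prop :=
  ∀ u ∈ s, ∀ v ∈ s, ¬ G.Adj u v

noncomputable def lapHerm (G : SimpleGraph V) [DecidableRel G.Adj] :
    (G.lapMatrix ℝ).IsHermitian := (G.posSemidef_lapMatrix ℝ).1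

/-- Laplacian spectral radius μ₁. -/
noncomputable def lapSpecRad (G : SimpleGraph V) [DecidableRel G.Adj] : ℝ :=
  ⨆ i, (lapHerm G).eigenvalues i

noncomputable def adjHerm (G : SimpleGraph V) [DecidableRel G.Adj] :
    (G.adjMatrix ℝ).IsHermitian := by
  rw [Matrix.IsHermitian, conjTranspose_eq_transpose_of_trivial, isSymm_adjMatrix]

/-- Adjacency spectral radius λ₁. -/
noncomputable def adjSpecRad (G : SimpleGraph V) [DecidableRel G.Adj] : ℝ :=
  ⨆ i, (adjHerm G).eigenvalues i

/-- Smallest adjacency eigenvalue λ_n. -/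
noncomputable def adjSpecMin (G : SimpleGraph V) [DecidableRel G.Adj] : ℝ :=
  ⨅ i, (adjHerm G).eigenvalues i

/-- The join `K₁ ∇ G`: a new universal vertex added to `G`. -/
def joinK1 (G : SimpleGraph V) : SimpleGraph (Option V) where
  Adj a b := match a, b with
    | none, none => False
    | none, some _ => True
    | some _, none => True
    | some u, some v => G.Adj u v
  symm := ⟨by rintro (_|u) (_|v) h <;> simp_all [G.adj_symm]⟩
  loopless := ⟨by rintro (_|u) h <;> simp_all⟩


/-!
Take a longest path `P`, with first vertex `v`, and suppose a vertex `w` lies off `P`. Let `H` be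
the component of `G - P` containing `w` and `N` the set of vertices of `P` with a neighbour in
`H`. Since `N` separates `H` from `v`, `|N| ≥ k`; since `P` cannot be extended at its last vertex,
every vertex of `N` has a successor on `P`. The vertices `w`, `v` and the successors of `N` are
pairwise non-adjacent: otherwise a detour through `H` (after reversing a segment of `P` if
needed), or a Pósa rotation of `P` at `v`, yields a longer path. This independent set has
`|N| + 2 ≥ k + 2` elements.
-/

namespace List

variable {α : Type*} {l B B' D : List α} {v x y x' y' : α}

theorem cons_cons_eq_append_cons_cons (h : x :: y :: B = D ++ x' :: y' :: B') :
    x = x' ∧ y = y' ∨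
      ∃ M, y :: B = M ++ y' :: B' ∧ M.head? = some y ∧ M.getLast? = some x' := by
  rcases D with _ | ⟨d, D⟩
  · simp only [nil_append, cons.injEq] at h
    exact Or.inl ⟨h.1, h.2.1⟩
  · simp only [cons_append, cons.injEq] at h
    refine Or.inr ⟨D ++ [x'], by simp [h.2], ?_, by simp⟩
    cases D <;> simp_all

theorem pair_isInfix_cases (h : [x, y] <:+: l) (h' : [x', y'] <:+: l) :
    x = x' ∧ y = y' ∨
      (∃ A M C, l = A ++ x :: (M ++ y' :: C) ∧ M.head? = some y ∧ M.getLast? = some x') ∨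
      ∃ A M C, l = A ++ x' :: (M ++ y :: C) ∧ M.head? = some y' ∧ M.getLast? = some x := by
  obtain ⟨A, B, rfl⟩ := h
  obtain ⟨A', B', h'⟩ := h'
  simp only [append_assoc, cons_append, nil_append] at h' ⊢
  rcases append_eq_append_iff.1 h' with ⟨D, rfl, hD⟩ | ⟨D, rfl, hD⟩
  · rcases cons_cons_eq_append_cons_cons hD with ⟨hx, hy⟩ | ⟨M, hM, hy, hx⟩
    · exact Or.inl ⟨hx.symm, hy.symm⟩
    · exact Or.inr (Or.inr ⟨A', M, B, by rw [← h', hM], hy, hx⟩)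
  · rcases cons_cons_eq_append_cons_cons hD with ⟨hx, hy⟩ | ⟨M, hM, hy, hx⟩
    · exact Or.inl ⟨hx, hy⟩
    · exact Or.inr (Or.inl ⟨A, M, B', by rw [hM], hy, hx⟩)

theorem Nodup.eq_of_pair_isInfix (hl : l.Nodup) (h : [x, y] <:+: l) (h' : [x', y] <:+: l) :
    x = x' := by
  rcases pair_isInfix_cases h h' with
    ⟨hx, -⟩ | ⟨A, M, C, rfl, hM, -⟩ | ⟨A, M, C, rfl, hM, -⟩
  · exact hx
  all_goals
    have hnd : (M ++ y :: C).Nodup := hl.sublist (by simp)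
    exact absurd mem_cons_self (disjoint_of_nodup_append hnd (mem_of_mem_head? hM))

theorem Nodup.not_pair_isInfix_of_head? (hl : l.Nodup) (hv : l.head? = some v) :
    ¬ [x, v] <:+: l := by
  rintro ⟨A, B, rfl⟩
  cases A <;> simp_all

theorem exists_pair_isInfix (hx : x ∈ l) (hlast : l.getLast? ≠ some x) :
    ∃ y, [x, y] <:+: l := by
  obtain ⟨A, B, rfl⟩ := append_of_mem hx
  rcases B with _ | ⟨y, B⟩
  · simp at hlast
  · exact ⟨y, A, B, by simp⟩

open Classical in
noncomputable def successors [DecidableEq α] (l : List α) (N : Finset α) : Finset α :=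
  {y ∈ l.toFinset | ∃ x ∈ N, [x, y] <:+: l}

theorem mem_successors [DecidableEq α] {N : Finset α} :
    y ∈ l.successors N ↔ ∃ x ∈ N, [x, y] <:+: l := by
  simpa [successors] using fun _ _ h => h.subset (by simp)

end List

namespace SimpleGraph

variable {V : Type*}

structure IsPathList (G : SimpleGraph V) (l : List V) : Prop where
  isChain : l.IsChain G.Adj
  nodup : l.Nodup

structure IsLongestPathList (G : SimpleGraph V) (l : List V) : Prop extends G.IsPathList l where
  length_le : ∀ l', G.IsPathList l' → l'.length ≤ l.length

def componentAvoiding (G : SimpleGraph V) (s : Set V) (w : V) : Set V :=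
  {x | ∃ p : G.Walk w x, ∀ z ∈ p.support, z ∉ s}

open Classical in
noncomputable def attachments [DecidableEq V] (G : SimpleGraph V) (l : List V) (H : Set V) :
    Finset V :=
  {x ∈ l.toFinset | ∃ h ∈ H, G.Adj x h}

variable {G : SimpleGraph V} {s : Set V} {l l' A B C M : List V} {a b h v w x y x' y' : V}

theorem mem_attachments [DecidableEq V] {H : Set V} :
    x ∈ G.attachments l H ↔ x ∈ l ∧ ∃ h ∈ H, G.Adj x h := by
  simp [attachments]

theorem mem_componentAvoiding_self (hw : w ∉ s) : w ∈ G.componentAvoiding s w :=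
  ⟨.nil, by simpa using hw⟩

theorem notMem_of_mem_componentAvoiding (hx : x ∈ G.componentAvoiding s w) : x ∉ s :=
  let ⟨p, hp⟩ := hx
  hp x p.end_mem_support

theorem mem_componentAvoiding_of_adj (hx : x ∈ G.componentAvoiding s w) (hxy : G.Adj x y)
    (hy : y ∉ s) : y ∈ G.componentAvoiding s w := by
  obtain ⟨p, hp⟩ := hx
  refine ⟨p.concat hxy, fun z hz => ?_⟩
  rw [Walk.support_concat, List.mem_append, List.mem_singleton] at hz
  rcases hz with hz | rfl
  exacts [hp z hz, hy]

theorem exists_isPath_of_mem_componentAvoiding (hx : x ∈ G.componentAvoiding s w)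
    (hy : y ∈ G.componentAvoiding s w) :
    ∃ p : G.Walk x y, p.IsPath ∧ ∀ z ∈ p.support, z ∉ s := by
  classical
  obtain ⟨p, hp⟩ := hx
  obtain ⟨q, hq⟩ := hy
  refine ⟨(p.reverse.append q).bypass, Walk.bypass_isPath _, fun z hz => ?_⟩
  have hz := (p.reverse.append q).support_bypass_subset_support hz
  rw [Walk.support_append, Walk.support_reverse, List.mem_append, List.mem_reverse] at hz
  rcases hz with hz | hz
  exacts [hp z hz, hq z (List.mem_of_mem_tail hz)]

theorem Walk.head?_support (p : G.Walk a b) : p.support.head? = some a := by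
  rw [← p.cons_tail_support, List.head?_cons]

theorem Walk.getLast?_support (p : G.Walk a b) : p.support.getLast? = some b := by
  rw [← p.dropLast_support_concat, List.getLast?_concat]

theorem isChain_adj_reverse : l.reverse.IsChain G.Adj ↔ l.IsChain G.Adj := by
  simp [List.isChain_reverse, G.adj_comm]

theorem isIndependentSet_insert [DecidableEq V] {s : Finset V} :
    G.IsIndependentSet (insert a s) ↔ G.IsIndependentSet s ∧ ∀ b ∈ s, ¬ G.Adj a b := by
  refine ⟨fun h => ⟨fun u hu v hv => h u (mem_insert_of_mem hu) v (mem_insert_of_mem hv),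
    fun b hb => h a (mem_insert_self a s) b (mem_insert_of_mem hb)⟩, ?_⟩
  rintro ⟨hs, ha⟩ u hu v hv
  rw [mem_insert] at hu hv
  rcases hu with rfl | hu <;> rcases hv with rfl | hv
  exacts [G.irrefl, ha v hv, fun h => ha u hu h.symm, hs u hu v hv]

theorem IsKConnected.le_card_of_separates [Fintype V] {k : ℕ} (hk : G.IsKConnected k)
    {S : Set V} {N : Finset V} (ha : a ∈ S) (hb : b ∉ S) (haN : a ∉ N) (hbN : b ∉ N)
    (hS : ∀ x ∈ S, ∀ y, G.Adj x y → y ∈ S ∨ y ∈ N) : k ≤ N.card := by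
  by_contra! hlt
  obtain ⟨p⟩ := (hk.2 N hlt).preconnected ⟨a, haN⟩ ⟨b, hbN⟩
  obtain ⟨d, -, hd₁, hd₂⟩ := p.exists_boundary_dart {x | x.1 ∈ S} ha hb
  exact (hS _ hd₁ _ d.adj).elim hd₂ d.snd.2

theorem IsPathList.reverse (hl : G.IsPathList l) : G.IsPathList l.reverse :=
  ⟨isChain_adj_reverse.2 hl.isChain, List.nodup_reverse.2 hl.nodup⟩

theorem exists_isLongestPathList [Fintype V] (G : SimpleGraph V) :
    ∃ l, G.IsLongestPathList l := by
  have hfin : {l : List V | G.IsPathList l}.Finite :=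
    (List.finite_length_le V (Fintype.card V)).subset fun l hl => hl.nodup.length_le_card
  obtain ⟨l, hl, hmax⟩ :=
    Set.exists_max_image _ List.length hfin ⟨[], List.isChain_nil, List.nodup_nil⟩
  exact ⟨l, hl, hmax⟩

namespace IsLongestPathList

theorem ne_nil [Nonempty V] (hl : G.IsLongestPathList l) : l ≠ [] := by
  have := hl.length_le [Classical.arbitrary V]
    ⟨List.isChain_singleton _, List.nodup_singleton _⟩
  rintro rfl
  simp at this

theorem reverse (hl : G.IsLongestPathList l) : G.IsLongestPathList l.reverse :=
  ⟨hl.toIsPathList.reverse, fun l' hl' => (hl.length_le l' hl').trans_eq l.length_reverse.symm⟩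

theorem rotate (hl : G.IsLongestPathList (A ++ B))
    (hAB : ∀ a ∈ A.head?, ∀ b ∈ B.head?, G.Adj a b) :
    G.IsLongestPathList (A.reverse ++ B) := by
  have hperm : (A.reverse ++ B).Perm (A ++ B) := (List.reverse_perm A).append_right B
  refine ⟨⟨?_, hperm.nodup_iff.2 hl.nodup⟩,
    fun l' hl' => hperm.length_eq ▸ hl.length_le l' hl'⟩
  refine (isChain_adj_reverse.2 (hl.isChain.prefix (List.prefix_append A B))).append
    (hl.isChain.suffix (List.suffix_append A B)) ?_
  rwa [List.getLast?_reverse]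

theorem not_isChain_of_perm_append (hl : G.IsLongestPathList l) {p : G.Walk a b}
    (hp : p.IsPath) (hpl : ∀ z ∈ p.support, z ∉ l) (hperm : l'.Perm (l ++ p.support)) :
    ¬ l'.IsChain G.Adj := fun hc => by
  have hnd : (l ++ p.support).Nodup :=
    List.nodup_append.2 ⟨hl.nodup, hp.support_nodup, fun z hz z' hz' h => hpl z' hz' (h ▸ hz)⟩
  have hlen := hl.length_le l' ⟨hc, hperm.nodup_iff.2 hnd⟩
  rw [hperm.length_eq, List.length_append, Walk.length_support] at hlen
  omega

theorem not_adj_of_getLast? (hl : G.IsLongestPathList l) (hv : l.getLast? = some v)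
    (hh : h ∉ l) : ¬ G.Adj v h := fun hvh =>
  hl.not_isChain_of_perm_append (p := Walk.nil' h) Walk.IsPath.nil (by simpa using hh)
    (List.Perm.refl _) (hl.isChain.append (List.isChain_singleton h) (by simpa [hv] using hvh))

theorem not_adj_of_head? (hl : G.IsLongestPathList l) (hv : l.head? = some v) (hh : h ∉ l) :
    ¬ G.Adj v h :=
  hl.reverse.not_adj_of_getLast? (by rwa [List.getLast?_reverse]) (by simpa using hh)

theorem not_adj_successor_of_head? (hl : G.IsLongestPathList l) (hv : l.head? = some v)
    (hxy : [x, y] <:+: l) (hxh : G.Adj x h) (hh : h ∉ l) : ¬ G.Adj v y := fun hvy => by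
  obtain ⟨A, B, rfl⟩ := hxy
  have hrot : G.IsLongestPathList ((A ++ [x]).reverse ++ y :: B) := by
    refine (show G.IsLongestPathList ((A ++ [x]) ++ y :: B) by simpa using hl).rotate ?_
    cases A <;> simp_all
  exact hrot.not_adj_of_head? (by simp) (by simp at hh ⊢; tauto) hxh

theorem not_adj_successor_of_detour (hl : G.IsLongestPathList l) (hxy : [x, y] <:+: l)
    {p : G.Walk a b} (hp : p.IsPath) (hpl : ∀ z ∈ p.support, z ∉ l) (hxa : G.Adj x a) :
    ¬ G.Adj b y := fun hby => by
  obtain ⟨A, B, rfl⟩ := hxy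
  refine hl.not_isChain_of_perm_append hp hpl (l' := A ++ x :: (p.support ++ y :: B)) ?_ ?_
  · simpa using
      (List.perm_append_comm (l₁ := p.support) (l₂ := y :: B)).cons x |>.append_left A
  · have hA : (A ++ [x]).IsChain G.Adj := hl.isChain.prefix ⟨y :: B, by simp⟩
    have hB : (y :: B).IsChain G.Adj := hl.isChain.suffix ⟨A ++ [x], by simp⟩
    have := hA.append (p.isChain_adj_support.append hB ?_) ?_
    · simpa using this
    · simpa [p.getLast?_support] using hby
    · simpa [p.head?_support] using hxa

theorem not_adj_of_reversed_detour (hl : G.IsLongestPathList (A ++ x :: (M ++ y' :: C)))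
    (hy : M.head? = some y) (hx' : M.getLast? = some x') {p : G.Walk a b} (hp : p.IsPath)
    (hpl : ∀ z ∈ p.support, z ∉ A ++ x :: (M ++ y' :: C)) (hxa : G.Adj x a)
    (hbx' : G.Adj b x') : ¬ G.Adj y y' := fun hyy' => by
  refine hl.not_isChain_of_perm_append hp hpl
    (l' := A ++ x :: (p.support ++ (M.reverse ++ y' :: C))) ?_ ?_
  · have hM := (List.perm_append_comm (l₁ := p.support) (l₂ := M.reverse ++ y' :: C)).trans
      (by simpa using M.reverse_perm.append_right (y' :: C ++ p.support))
    simpa using (hM.cons x).append_left A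
  · have hA : (A ++ [x]).IsChain G.Adj := hl.isChain.prefix ⟨M ++ y' :: C, by simp⟩
    have hM : M.reverse.IsChain G.Adj :=
      isChain_adj_reverse.2 (hl.isChain.infix ⟨A ++ [x], y' :: C, by simp⟩)
    have hC : (y' :: C).IsChain G.Adj := hl.isChain.suffix ⟨A ++ x :: M, by simp⟩
    have := hA.append (p.isChain_adj_support.append (hM.append hC ?_) ?_) ?_
    · simpa using this
    · simpa [List.getLast?_reverse, hy] using hyy'
    · simpa [p.getLast?_support, List.head?_reverse, hx'] using hbx'
    · simpa [p.head?_support] using hxa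

theorem not_adj_successors_of_detour (hl : G.IsLongestPathList l) (hxy : [x, y] <:+: l)
    (hxy' : [x', y'] <:+: l) {p : G.Walk a b} (hp : p.IsPath) (hpl : ∀ z ∈ p.support, z ∉ l)
    (hxa : G.Adj x a) (hbx' : G.Adj b x') : ¬ G.Adj y y' := by
  rcases List.pair_isInfix_cases hxy hxy' with
    ⟨-, rfl⟩ | ⟨A, M, C, rfl, hM, hM'⟩ | ⟨A, M, C, rfl, hM, hM'⟩
  · exact G.irrefl
  · exact hl.not_adj_of_reversed_detour hM hM' hp hpl hxa hbx'
  · exact fun hyy' => hl.not_adj_of_reversed_detour hM hM' hp.reverse (by simpa using hpl)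
      hbx'.symm hxa.symm hyy'.symm

theorem le_card_attachments [Fintype V] [DecidableEq V] {k : ℕ} (hl : G.IsLongestPathList l)
    (hk : G.IsKConnected k) (hw : w ∉ l) (hv : l.head? = some v) :
    k ≤ (G.attachments l (G.componentAvoiding {z | z ∈ l} w)).card := by
  set H := G.componentAvoiding {z | z ∈ l} w
  have hHl : ∀ h ∈ H, h ∉ l := fun _ hh =>
    notMem_of_mem_componentAvoiding (s := {z | z ∈ l}) hh
  refine hk.le_card_of_separates (mem_componentAvoiding_self hw)
    (fun hvH => hHl v hvH (List.mem_of_mem_head? hv)) (by simp [mem_attachments, hw])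
    (by simpa [mem_attachments] using fun _ h hh => hl.not_adj_of_head? hv (hHl h hh))
    fun x hx y hxy => ?_
  by_cases hy : y ∈ l
  · exact Or.inr (mem_attachments.2 ⟨hy, x, hx, hxy.symm⟩)
  · exact Or.inl (mem_componentAvoiding_of_adj hx hxy hy)

theorem card_attachments_le [DecidableEq V] {H : Set V} (hl : G.IsLongestPathList l)
    (hH : ∀ h ∈ H, h ∉ l) :
    (G.attachments l H).card ≤ (l.successors (G.attachments l H)).card := by
  refine card_le_card_of_forall_subsingleton (fun x y => [x, y] <:+: l) (fun x hx => ?_)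
    fun y _ x₁ hx₁ x₂ hx₂ => hl.nodup.eq_of_pair_isInfix hx₁.2 hx₂.2
  obtain ⟨hxl, h, hh, hxh⟩ := mem_attachments.1 hx
  obtain ⟨y, hxy⟩ := List.exists_pair_isInfix hxl fun hlast =>
    hl.not_adj_of_getLast? hlast (hH h hh) hxh
  exact ⟨y, List.mem_successors.2 ⟨x, hx, hxy⟩, hxy⟩

theorem isIndependentSet_insert_insert [DecidableEq V] (hl : G.IsLongestPathList l)
    (hw : w ∉ l) (hv : l.head? = some v) :
    G.IsIndependentSet (insert w (insert v
      (l.successors (G.attachments l (G.componentAvoiding {z | z ∈ l} w))))) := by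
  set H := G.componentAvoiding {z | z ∈ l} w
  have hS : ∀ y ∈ l.successors (G.attachments l H),
      ∃ x, [x, y] <:+: l ∧ ∃ h ∈ H, G.Adj x h := by
    intro y hy
    obtain ⟨x, hx, hxy⟩ := List.mem_successors.1 hy
    exact ⟨x, hxy, (mem_attachments.1 hx).2⟩
  refine isIndependentSet_insert.2 ⟨isIndependentSet_insert.2 ⟨?_, ?_⟩, ?_⟩
  · intro y hy y' hy'
    obtain ⟨x, hxy, a, ha, hxa⟩ := hS y hy
    obtain ⟨x', hxy', b, hb, hx'b⟩ := hS y' hy'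
    obtain ⟨p, hp, hpl⟩ := exists_isPath_of_mem_componentAvoiding ha hb
    exact hl.not_adj_successors_of_detour hxy hxy' hp hpl hxa hx'b.symm
  · intro y hy
    obtain ⟨x, hxy, a, ha, hxa⟩ := hS y hy
    exact hl.not_adj_successor_of_head? hv hxy hxa
      (notMem_of_mem_componentAvoiding (s := {z | z ∈ l}) ha)
  · intro y hy
    rcases mem_insert.1 hy with rfl | hy
    · exact fun h => hl.not_adj_of_head? hv hw h.symm
    · obtain ⟨x, hxy, a, ha, hxa⟩ := hS y hy
      obtain ⟨p, hp, hpl⟩ :=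
        exists_isPath_of_mem_componentAvoiding ha (mem_componentAvoiding_self hw)
      exact hl.not_adj_successor_of_detour hxy hp hpl hxa

theorem exists_isIndependentSet [Fintype V] [DecidableEq V] {k : ℕ}
    (hl : G.IsLongestPathList l) (hk : G.IsKConnected k) (hw : w ∉ l) :
    ∃ s : Finset V, G.IsIndependentSet s ∧ k + 2 ≤ s.card := by
  have : Nonempty V := ⟨w⟩
  obtain ⟨v, hv⟩ : ∃ v, l.head? = some v := ⟨_, List.head?_eq_some_head hl.ne_nil⟩
  set N := G.attachments l (G.componentAvoiding {z | z ∈ l} w)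
  have hkN : k ≤ N.card := hl.le_card_attachments hk hw hv
  have hNS : N.card ≤ (l.successors N).card :=
    hl.card_attachments_le fun _ hh => notMem_of_mem_componentAvoiding (s := {z | z ∈ l}) hh
  have hvS : v ∉ l.successors N := fun hvS =>
    let ⟨_, _, hxv⟩ := List.mem_successors.1 hvS
    hl.nodup.not_pair_isInfix_of_head? hv hxv
  have hwvS : w ∉ insert v (l.successors N) := by
    rw [mem_insert, not_or, List.mem_successors]
    refine ⟨?_, fun ⟨_, _, hxw⟩ => hw (hxw.subset (by simp))⟩
    rintro rfl
    exact hw (List.mem_of_mem_head? hv)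
  refine ⟨_, hl.isIndependentSet_insert_insert hw hv, ?_⟩
  rw [card_insert_of_notMem hwvS, card_insert_of_notMem hvS]
  omega

theorem isTraceable [DecidableEq V] [Nonempty V] (hl : G.IsLongestPathList l)
    (hcover : ∀ v, v ∈ l) : G.IsTraceable :=
  ⟨_, _, Walk.ofSupport l hl.ne_nil hl.isChain, fun v => by
    rw [Walk.support_ofSupport]
    exact List.count_eq_one_of_mem hl.nodup (hcover v)⟩

end IsLongestPathList

end SimpleGraph

theorem chvatal_erdos_traceable_general (G : SimpleGraph V) (k : ℕ)
    (hk : G.IsKConnected k)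
    (hα : ∀ s : Finset V, G.IsIndependentSet s → s.card ≤ k + 1) :
    G.IsTraceable := by
  obtain ⟨l, hl⟩ := G.exists_isLongestPathList
  by_cases hcover : ∀ v, v ∈ l
  · have : Nonempty V := Fintype.card_pos_iff.1 (Nat.zero_lt_of_lt hk.1)
    exact hl.isTraceable hcover
  · obtain ⟨w, hw⟩ := not_forall.1 hcover
    obtain ⟨s, hs, hcard⟩ := hl.exists_isIndependentSet hk hw
    have := hα s hs
    omega

theorem chvatal_erdos_traceable (G : SimpleGraph V) (k : ℕ)
    (hn : 3 ≤ Fintype.card V) (hk : G.IsKConnected k)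
    (hα : ∀ s : Finset V, G.IsIndependentSet s → s.card ≤ k + 1) :
    G.IsTraceable :=
  chvatal_erdos_traceable_general G k hk hα
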